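/- Let s ≥ 1, q ∈ (2s-1, 2s) a real number, N ≥ 1, η > 0, and let h, y₂, …, y_s : ℤ → ℂ be supported on {1,…,N}. Suppose ‖\widehat{h}‖_∞ ≤ ηN and ‖\widehat{h}‖_q, ‖\widehat{y_i}‖_q ≤ C N^{1-1/q} for all i, where ‖\widehat{f}‖_q = (∫₀¹|\widehat{f}(α)|^q dα)^{1/q}. Then for any subset A ⊆ {1,…,sN}, ∑_{n ∈ A} |(h * y₂ * ⋯ * y_s)(n)| ≤ |A|^{1/2} (ηN)^{s - q/2} C^{q/2} N^{(q-1)/2}. -/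

import Mathlib

/-- e(x) = e^{2πix}. -/
noncomputable def e (x : ℝ) : ℂ := Complex.exp (2 * Real.pi * Complex.I * x)

/-- Fourier transform of a finitely supported function on ℤ. -/
noncomputable def FT (f : ℤ → ℂ) (α : ℝ) : ℂ := ∑ᶠ n : ℤ, f n * e ((n : ℝ) * α)

/-- Convolution of functions on ℤ. -/
noncomputable def conv (f g : ℤ → ℂ) : ℤ → ℂ := fun n => ∑ᶠ m : ℤ, f m * g (n - m)

/-- Dirac delta at 0, the identity for convolution. -/
def delta0 : ℤ → ℂ := fun n => if n = 0 then 1 else 0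

/-!
Write `g = h * y₂ * ⋯ * y_s`, so that `ĝ = ĥ ŷ₂ ⋯ ŷ_s`. By Cauchy–Schwarz and Parseval,
`(∑_{n ∈ A} |g n|)² ≤ |A| ∫₀¹ |ĝ|²`. Bounding `|ĥ|² ≤ (ηN)^(2s-q) |ĥ|^(q-2(s-1))` pointwise, the
generalized Hölder inequality with weights `(q - 2(s-1))/q` on `|ĥ|^q` and `2/q` on each `|ŷᵢ|^q`
(they sum to 1) gives `∫₀¹ |ĥ|^(q-2(s-1)) ∏ᵢ |ŷᵢ|² ≤ C^q N^(q-1)`.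
-/

open Finset Function MeasureTheory
open scoped Pointwise ENNReal

theorem e_add (x y : ℝ) : e (x + y) = e x * e y := by
  simp only [e, Complex.ofReal_add, mul_add, Complex.exp_add]

theorem conj_e (x : ℝ) : starRingEnd ℂ (e x) = e (-x) := by
  simp only [e, ← Complex.exp_conj, map_mul, Complex.conj_ofReal, Complex.conj_I, map_ofNat,
    Complex.ofReal_neg]
  ring_nf

@[fun_prop]
theorem continuous_e : Continuous e := by
  unfold e; fun_prop

theorem intervalIntegral_e_intCast_mul (k : ℤ) :
    ∫ α in (0 : ℝ)..1, e (k * α) = if k = 0 then 1 else 0 := by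
  split_ifs with hk
  · simp [hk, e]
  have hc : 2 * Real.pi * Complex.I * k ≠ 0 := by simp [Real.pi_ne_zero, hk]
  have hexp : Complex.exp (2 * Real.pi * Complex.I * k) = 1 := by
    rw [← Complex.exp_int_mul_two_pi_mul_I k]; ring_nf
  simp only [e, Complex.ofReal_mul, Complex.ofReal_intCast, ← mul_assoc]
  rw [integral_exp_mul_complex hc]
  simp [hexp]

theorem FT_eq_sum {f : ℤ → ℂ} {S : Finset ℤ} (hf : support f ⊆ S) (α : ℝ) :
    FT f α = ∑ n ∈ S, f n * e (n * α) :=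
  finsum_eq_sum_of_support_subset _ ((support_mul_subset_left _ _).trans hf)

theorem conv_eq_sum {f : ℤ → ℂ} (g : ℤ → ℂ) {S : Finset ℤ} (hf : support f ⊆ S) (n : ℤ) :
    conv f g n = ∑ m ∈ S, f m * g (n - m) :=
  finsum_eq_sum_of_support_subset _ ((support_mul_subset_left _ _).trans hf)

theorem continuous_FT {f : ℤ → ℂ} (hf : (support f).Finite) : Continuous (FT f) := by
  rw [funext (FT_eq_sum hf.coe_toFinset.ge)]
  fun_prop

theorem FT_translate (g : ℤ → ℂ) (m : ℤ) (α : ℝ) :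
    FT (fun n => g (n - m)) α = e (m * α) * FT g α := by
  rw [FT, FT, mul_finsum, ← finsum_comp_equiv (Equiv.addRight m)]
  refine finsum_congr fun k => ?_
  simp only [Equiv.coe_addRight, add_sub_cancel_right, Int.cast_add, add_mul, e_add]
  ring

theorem support_conv_subset (f g : ℤ → ℂ) : support (conv f g) ⊆ support f + support g := by
  intro n hn
  obtain ⟨m, hm⟩ : ∃ m, f m * g (n - m) ≠ 0 := by
    by_contra! h
    exact hn (finsum_eq_zero_of_forall_eq_zero h)
  exact ⟨m, left_ne_zero_of_mul hm, n - m, right_ne_zero_of_mul hm, add_sub_cancel _ _⟩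

theorem FT_conv {f g : ℤ → ℂ} (hf : (support f).Finite) (hg : (support g).Finite) (α : ℝ) :
    FT (conv f g) α = FT f α * FT g α := by
  set S := hf.toFinset
  set T := hg.toFinset
  have hfS : support f ⊆ S := hf.coe_toFinset.ge
  have hST : ∀ m ∈ S, support (fun n => g (n - m)) ⊆ ↑(S + T) := fun m hm n hn =>
    Finset.mem_add.2 ⟨m, hm, n - m, by simpa [T] using hn, add_sub_cancel _ _⟩
  have hconv : support (conv f g) ⊆ ↑(S + T) := by
    simpa [Finset.coe_add, S, T] using support_conv_subset f g
  calc FT (conv f g) α = ∑ n ∈ S + T, ∑ m ∈ S, f m * (g (n - m) * e (n * α)) := by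
        simp_rw [FT_eq_sum hconv, conv_eq_sum g hfS, Finset.sum_mul, mul_assoc]
    _ = ∑ m ∈ S, f m * FT (fun n => g (n - m)) α := by
        rw [Finset.sum_comm]
        refine Finset.sum_congr rfl fun m hm => ?_
        rw [FT_eq_sum (hST m hm), Finset.mul_sum]
    _ = FT f α * FT g α := by
        simp_rw [FT_translate, FT_eq_sum hfS, Finset.sum_mul, mul_assoc]

theorem FT_delta0 (α : ℝ) : FT delta0 α = 1 := by
  rw [FT, finsum_eq_single _ 0 fun _ hn => by simp [delta0, hn]]
  simp [delta0, e]

theorem finite_support_delta0 : (support delta0).Finite :=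
  (Set.finite_singleton 0).subset fun _ hn => by_contra fun h => hn (if_neg h)

theorem finite_support_foldr_conv {l : List (ℤ → ℂ)} (hl : ∀ f ∈ l, (support f).Finite) :
    (support (l.foldr conv delta0)).Finite := by
  induction l with
  | nil => exact finite_support_delta0
  | cons f l ih =>
    simp only [List.mem_cons, forall_eq_or_imp] at hl
    exact (hl.1.add (ih hl.2)).subset (support_conv_subset _ _)

theorem FT_foldr_conv {l : List (ℤ → ℂ)} (hl : ∀ f ∈ l, (support f).Finite) (α : ℝ) :
    FT (l.foldr conv delta0) α = (l.map (FT · α)).prod := by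
  induction l with
  | nil => exact FT_delta0 α
  | cons f l ih =>
    simp only [List.mem_cons, forall_eq_or_imp] at hl
    rw [List.foldr_cons, FT_conv hl.1 (finite_support_foldr_conv hl.2), ih hl.2]
    rfl

theorem FT_foldr_conv_ofFn {s : ℕ} {F : Fin s → ℤ → ℂ} (hF : ∀ i, (support (F i)).Finite)
    (α : ℝ) : FT ((List.ofFn F).foldr conv delta0) α = ∏ i, FT (F i) α := by
  rw [FT_foldr_conv (by simpa [List.mem_ofFn] using hF) α, List.map_ofFn, List.prod_ofFn]
  rfl

theorem intervalIntegral_norm_FT_sq {f : ℤ → ℂ} {S : Finset ℤ} (hf : support f ⊆ S) :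
    ∫ α in (0 : ℝ)..1, ‖FT f α‖ ^ 2 = ∑ n ∈ S, ‖f n‖ ^ 2 := by
  set c : ℤ → ℤ → ℝ → ℂ := fun n m α => f n * starRingEnd ℂ (f m) * e ((n - m : ℤ) * α)
  have hexpand : ∀ α : ℝ, ((‖FT f α‖ ^ 2 : ℝ) : ℂ) = ∑ n ∈ S, ∑ m ∈ S, c n m α := by
    intro α
    rw [Complex.ofReal_pow, ← Complex.mul_conj', FT_eq_sum hf, map_sum, Finset.sum_mul_sum]
    refine Finset.sum_congr rfl fun n _ => Finset.sum_congr rfl fun m _ => ?_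
    show _ = f n * starRingEnd ℂ (f m) * e (((n - m : ℤ) : ℝ) * α)
    rw [map_mul, conj_e, Int.cast_sub, sub_mul, sub_eq_add_neg, e_add]
    ring
  have hint : ∀ n m, IntervalIntegrable (c n m) volume 0 1 := fun n m =>
    Continuous.intervalIntegrable (by fun_prop) _ _
  apply Complex.ofReal_injective
  calc ((∫ α in (0 : ℝ)..1, ‖FT f α‖ ^ 2 : ℝ) : ℂ)
      = ∑ n ∈ S, ∑ m ∈ S, ∫ α in (0 : ℝ)..1, c n m α := by
        simp_rw [← intervalIntegral.integral_ofReal, hexpand]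
        rw [intervalIntegral.integral_finsetSum fun n _ =>
          Continuous.intervalIntegrable (by fun_prop) _ _]
        exact Finset.sum_congr rfl fun n _ =>
          intervalIntegral.integral_finsetSum fun m _ => hint n m
    _ = ∑ n ∈ S, f n * starRingEnd ℂ (f n) := by
        simp only [c, intervalIntegral.integral_const_mul, intervalIntegral_e_intCast_mul,
          sub_eq_zero, mul_ite, mul_one, mul_zero, Finset.sum_ite_eq]
        exact Finset.sum_congr rfl fun n hn => if_pos hn
    _ = ((∑ n ∈ S, ‖f n‖ ^ 2 : ℝ) : ℂ) := by
        push_cast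
        simp_rw [Complex.mul_conj']

theorem sq_sum_norm_le_card_mul_intervalIntegral_norm_FT_sq {f : ℤ → ℂ}
    (hf : (support f).Finite) (A : Finset ℤ) :
    (∑ n ∈ A, ‖f n‖) ^ 2 ≤ (#A : ℝ) * ∫ α in (0 : ℝ)..1, ‖FT f α‖ ^ 2 := by
  classical
  rw [intervalIntegral_norm_FT_sq (S := A ∪ hf.toFinset) (by simp)]
  calc (∑ n ∈ A, ‖f n‖) ^ 2 ≤ (#A : ℝ) * ∑ n ∈ A, ‖f n‖ ^ 2 := sq_sum_le_card_mul_sum_sq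
    _ ≤ (#A : ℝ) * ∑ n ∈ A ∪ hf.toFinset, ‖f n‖ ^ 2 := by
      gcongr
      exact subset_union_left

theorem prod_sq_eq_rpow_mul_prod_rpow_rpow {ι : Type*} [Fintype ι] [DecidableEq ι] (i₀ : ι)
    (x : ι → ℝ≥0∞) {q : ℝ} (hq : 0 < q) (hq₁ : 2 * ((Fintype.card ι : ℝ) - 1) ≤ q)
    (hq₂ : q ≤ 2 * Fintype.card ι) :
    ∏ i, x i ^ 2 = x i₀ ^ (2 * (Fintype.card ι : ℝ) - q)
      * ((x i₀ ^ q) ^ ((q - 2 * ((Fintype.card ι : ℝ) - 1)) / q)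
        * ∏ i ∈ univ.erase i₀, (x i ^ q) ^ (2 / q)) := by
  have h2 : ∀ y : ℝ≥0∞, (y ^ q) ^ (2 / q) = y ^ 2 := fun y => by
    rw [← ENNReal.rpow_mul, mul_div_cancel₀ _ hq.ne', ENNReal.rpow_two]
  rw [← ENNReal.rpow_mul, mul_div_cancel₀ _ hq.ne', ← mul_assoc,
    ← ENNReal.rpow_add_of_nonneg _ _ (by linarith) (by linarith),
    show 2 * (Fintype.card ι : ℝ) - q + (q - 2 * ((Fintype.card ι : ℝ) - 1)) = 2 by ring,
    ENNReal.rpow_two, prod_congr rfl fun i _ => h2 _,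
    mul_prod_erase _ (fun i => x i ^ 2) (mem_univ _)]

theorem lintegral_prod_sq_le {α ι : Type*} [MeasurableSpace α] {μ : Measure α} [Fintype ι]
    (i₀ : ι) {u : ι → α → ℝ≥0∞} (hu : ∀ i, AEMeasurable (u i) μ) {q : ℝ} (hq : 0 < q)
    (hq₁ : 2 * ((Fintype.card ι : ℝ) - 1) ≤ q) (hq₂ : q ≤ 2 * Fintype.card ι) {M B : ℝ≥0∞}
    (hM : ∀ x, u i₀ x ≤ M) (hB : ∀ i, ∫⁻ x, u i x ^ q ∂μ ≤ B) :
    ∫⁻ x, ∏ i, u i x ^ 2 ∂μ ≤ M ^ (2 * Fintype.card ι - q) * B := by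
  classical
  set s : ℝ := (Fintype.card ι : ℝ)
  set p₀ : ℝ := (q - 2 * (s - 1)) / q
  have hp₀ : 0 ≤ p₀ := div_nonneg (by linarith) hq.le
  have hcard : ((univ.erase i₀).card : ℝ) = s - 1 := by
    rw [card_erase_of_mem (mem_univ _), card_univ, Nat.cast_pred (Fintype.card_pos_iff.2 ⟨i₀⟩)]
  have hweights : p₀ + 2 / q * (univ.erase i₀).card = 1 := by
    rw [hcard]
    simp only [p₀]
    field_simp
    ring
  have hmeas : ∀ i, AEMeasurable (fun x => u i x ^ q) μ := fun i => (hu i).pow_const q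
  calc ∫⁻ x, ∏ i, u i x ^ 2 ∂μ
      ≤ ∫⁻ x, M ^ (2 * s - q)
          * ((u i₀ x ^ q) ^ p₀ * ∏ i ∈ univ.erase i₀, (u i x ^ q) ^ (2 / q)) ∂μ := by
        refine lintegral_mono fun x => ?_
        rw [prod_sq_eq_rpow_mul_prod_rpow_rpow i₀ (u · x) hq hq₁ hq₂]
        gcongr
        exact hM x
    _ = M ^ (2 * s - q)
          * ∫⁻ x, (u i₀ x ^ q) ^ p₀ * ∏ i ∈ univ.erase i₀, (u i x ^ q) ^ (2 / q) ∂μ :=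
        lintegral_const_mul'' _ (((hmeas i₀).pow_const _).mul
          (Finset.aemeasurable_fun_prod _ fun i _ => (hmeas i).pow_const _))
    _ ≤ M ^ (2 * s - q) * ((∫⁻ x, u i₀ x ^ q ∂μ) ^ p₀
          * ∏ i ∈ univ.erase i₀, (∫⁻ x, u i x ^ q ∂μ) ^ (2 / q)) := by
        gcongr
        exact ENNReal.lintegral_mul_prod_norm_pow_le _ (hmeas i₀) (fun i _ => hmeas i) p₀
          (by rwa [sum_const, nsmul_eq_mul, mul_comm]) hp₀
          fun _ _ => by positivity
    _ ≤ M ^ (2 * s - q) * (B ^ p₀ * ∏ _i ∈ univ.erase i₀, B ^ (2 / q)) := by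
        gcongr with i
        · exact hB i₀
        · exact hB i
    _ = M ^ (2 * s - q) * B := by
        rw [prod_const, ← ENNReal.rpow_natCast, ← ENNReal.rpow_mul,
          ← ENNReal.rpow_add_of_nonneg _ _ hp₀ (by positivity), hweights, ENNReal.rpow_one]

theorem ofReal_intervalIntegral_eq_lintegral {f : ℝ → ℝ} (hf : Continuous f) (h0 : 0 ≤ f)
    {a b : ℝ} (hab : a ≤ b) :
    ENNReal.ofReal (∫ α in a..b, f α) = ∫⁻ α in Set.Ioc a b, ENNReal.ofReal (f α) := by
  rw [intervalIntegral.integral_of_le hab]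
  exact ofReal_integral_eq_lintegral_ofReal hf.integrableOn_Ioc (ae_of_all _ h0)

theorem intervalIntegral_prod_norm_sq_le {ι : Type*} [Fintype ι] (i₀ : ι) {φ : ι → ℝ → ℂ}
    (hφ : ∀ i, Continuous (φ i)) {q M B : ℝ} (hq : 0 < q)
    (hq₁ : 2 * ((Fintype.card ι : ℝ) - 1) ≤ q) (hq₂ : q ≤ 2 * Fintype.card ι)
    (hM : ∀ α, ‖φ i₀ α‖ ≤ M) (hB : ∀ i, ∫ α in (0 : ℝ)..1, ‖φ i α‖ ^ q ≤ B) :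
    ∫ α in (0 : ℝ)..1, ∏ i, ‖φ i α‖ ^ 2 ≤ M ^ (2 * Fintype.card ι - q) * B := by
  have hM₀ : 0 ≤ M := (norm_nonneg _).trans (hM 0)
  have hB₀ : 0 ≤ B :=
    (intervalIntegral.integral_nonneg zero_le_one fun α _ => by positivity).trans (hB i₀)
  have hLq : ∀ i, ∫⁻ α in Set.Ioc 0 1, ENNReal.ofReal ‖φ i α‖ ^ q ≤ ENNReal.ofReal B :=
    fun i => by
    rw [lintegral_congr fun α => ENNReal.ofReal_rpow_of_nonneg (norm_nonneg _) hq.le,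
      ← ofReal_intervalIntegral_eq_lintegral ((hφ i).norm.rpow_const fun _ => Or.inr hq.le)
        (fun α => by positivity) zero_le_one]
    exact ENNReal.ofReal_le_ofReal (hB i)
  have key := lintegral_prod_sq_le i₀ (fun i => (hφ i).norm.measurable.ennreal_ofReal.aemeasurable)
    hq hq₁ hq₂ (fun α => ENNReal.ofReal_le_ofReal (hM α)) hLq
  rw [← ENNReal.ofReal_le_ofReal_iff (by positivity),
    ofReal_intervalIntegral_eq_lintegral (by fun_prop) (fun α => by positivity) zero_le_one,
    ENNReal.ofReal_mul (by positivity), ← ENNReal.ofReal_rpow_of_nonneg hM₀ (by linarith)]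
  simpa only [ENNReal.ofReal_prod_of_nonneg fun i _ => sq_nonneg _,
    ENNReal.ofReal_pow (norm_nonneg _)] using key

theorem le_mul_rpow_of_rpow_one_div_le {X C N q : ℝ} (hX : 0 ≤ X) (hC : 0 ≤ C) (hN : 0 ≤ N)
    (hq : 0 < q) (h : X ^ (1 / q) ≤ C * N ^ (1 - 1 / q)) : X ≤ C ^ q * N ^ (q - 1) := by
  rwa [one_div, Real.rpow_inv_le_iff_of_pos hX (by positivity) hq,
    Real.mul_rpow hC (by positivity), ← Real.rpow_mul hN, sub_mul, inv_mul_cancel₀ hq.ne',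
    one_mul] at h

theorem rpow_pow_two (x y : ℝ) (hx : 0 ≤ x) : (x ^ y) ^ 2 = x ^ (2 * y) := by
  rw [← Real.rpow_mul_natCast hx, mul_comm]
  norm_num

/-- `F 0` plays the role of `h` and `F i`, `i ≠ 0`, the roles of `y₂, …, y_s`. -/
theorem transference_restriction_estimate_general (s N : ℕ) (hs : 1 ≤ s)
    (q η C : ℝ) (hq1 : 2 * (s : ℝ) - 1 < q) (hq2 : q < 2 * (s : ℝ))
    (hC : 0 < C)
    (F : Fin s → ℤ → ℂ) (hsupp : ∀ i n, F i n ≠ 0 → n ∈ Finset.Icc (1 : ℤ) N)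
    (hinf : ∀ α : ℝ, ‖FT (F ⟨0, hs⟩) α‖ ≤ η * N)
    (hLq : ∀ i, (∫ α in (0 : ℝ)..1, ‖FT (F i) α‖ ^ q) ^ (1 / q) ≤ C * (N : ℝ) ^ (1 - 1 / q))
    (A : Finset ℤ) :
    ∑ n ∈ A, ‖(List.ofFn F).foldr conv delta0 n‖
      ≤ (A.card : ℝ) ^ ((1 : ℝ) / 2) * (η * N) ^ ((s : ℝ) - q / 2)
        * C ^ (q / 2) * (N : ℝ) ^ ((q - 1) / 2) := by
  have hq₀ : 0 < q := by
    have : (1 : ℝ) ≤ s := by exact_mod_cast hs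
    linarith
  have hηN : 0 ≤ η * N := (norm_nonneg _).trans (hinf 0)
  have hfin : ∀ i, (support (F i)).Finite := fun i =>
    (Set.finite_Icc 1 (N : ℤ)).subset fun n hn => by simpa using hsupp i n hn
  have hL2 : ∫ α in (0 : ℝ)..1, ‖FT ((List.ofFn F).foldr conv delta0) α‖ ^ 2
      ≤ (η * N) ^ (2 * (s : ℝ) - q) * (C ^ q * (N : ℝ) ^ (q - 1)) := by
    simp_rw [FT_foldr_conv_ofFn hfin, norm_prod, ← prod_pow]
    simpa only [Fintype.card_fin] using intervalIntegral_prod_norm_sq_le ⟨0, hs⟩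
      (fun i => continuous_FT (hfin i)) hq₀ (by simp only [Fintype.card_fin]; linarith)
      (by simp only [Fintype.card_fin]; linarith) hinf fun i =>
        le_mul_rpow_of_rpow_one_div_le (intervalIntegral.integral_nonneg zero_le_one
          fun α _ => by positivity) hC.le (Nat.cast_nonneg N) hq₀ (hLq i)
  refine (pow_le_pow_iff_left₀ (sum_nonneg fun n _ => norm_nonneg _) (by positivity)
    two_ne_zero).1 ?_
  calc (∑ n ∈ A, ‖(List.ofFn F).foldr conv delta0 n‖) ^ 2
      ≤ #A * ((η * N) ^ (2 * (s : ℝ) - q) * (C ^ q * (N : ℝ) ^ (q - 1))) :=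
        (sq_sum_norm_le_card_mul_intervalIntegral_norm_FT_sq
          (finite_support_foldr_conv (by simpa [List.mem_ofFn] using hfin)) A).trans (by gcongr)
    _ = _ := by
      rw [mul_pow, mul_pow, mul_pow, rpow_pow_two _ _ (Nat.cast_nonneg _), rpow_pow_two _ _ hηN,
        rpow_pow_two _ _ hC.le, rpow_pow_two _ _ (Nat.cast_nonneg _),
        show (2 : ℝ) * (1 / 2) = 1 by norm_num, Real.rpow_one]
      ring_nf

/-- Key Cauchy–Schwarz/Hölder estimate in the almost-all transference principle.
`F 0` plays the role of `h` and `F i`, `i ≠ 0`, the roles of `y₂, …, y_s`. -/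
theorem transference_restriction_estimate (s N : ℕ) (hs : 1 ≤ s) (hN : 1 ≤ N)
    (q η C : ℝ) (hq1 : 2 * (s : ℝ) - 1 < q) (hq2 : q < 2 * (s : ℝ))
    (hη : 0 < η) (hC : 0 < C)
    (F : Fin s → ℤ → ℂ) (hsupp : ∀ i n, F i n ≠ 0 → n ∈ Finset.Icc (1 : ℤ) N)
    (hinf : ∀ α : ℝ, ‖FT (F ⟨0, hs⟩) α‖ ≤ η * N)
    (hLq : ∀ i, (∫ α in (0 : ℝ)..1, ‖FT (F i) α‖ ^ q) ^ (1 / q) ≤ C * (N : ℝ) ^ (1 - 1 / q))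
    (A : Finset ℤ) (hA : A ⊆ Finset.Icc (1 : ℤ) (s * N)) :
    ∑ n ∈ A, ‖(List.ofFn F).foldr conv delta0 n‖
      ≤ (A.card : ℝ) ^ ((1 : ℝ) / 2) * (η * N) ^ ((s : ℝ) - q / 2)
        * C ^ (q / 2) * (N : ℝ) ^ ((q - 1) / 2) :=
  transference_restriction_estimate_general s N hs q η C hq1 hq2 hC F hsupp hinf hLq A
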